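/- A normalized n-partite amplitude tensor a is separable if and only if for every party k and every choice of row index I₀ and column index s with M_k(I₀, s) ≠ 0, the columns of M_k satisfy the proportionality relations M_k(I₀, s) * M_k(J, t) = M_k(I₀, t) * M_k(J, s) for every column index t and every row index J (i.e., M_k(I₀, s) times the t-th column equals M_k(I₀, t) times the s-th column). -/

import Mathlib

/-!
The column relations say exactly that `a x * a y = a x' * a y'` whenever `a x ≠ 0` and `x'`, `y'`
arise from `x`, `y` by exchanging one coordinate. Fix `x₀` with `a x₀ ≠ 0` (if there is none,
`a = 0` is trivially a product). Replacing the coordinates of `x₀` by those of `y` one at a time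
gives `a x₀ ^ n * a y = a x₀ * ∏ k, a (update x₀ k (y k))`, which writes `a y` as a product of
one-variable functions of the `y k`.
-/

open Matrix

noncomputable section

/-- Insert `j` at position `k` into the partial index tuple `I`, producing a full index tuple. -/
def insertAt {n : ℕ} {d : Fin n → ℕ} (k : Fin n)
    (I : ∀ s : {s : Fin n // s ≠ k}, Fin (d s)) (j : Fin (d k)) :
    ∀ t : Fin n, Fin (d t) :=
  fun t => if h : t = k then Fin.cast (congrArg d h).symm j else I ⟨t, h⟩

/-- The `k`-th flattening of an `n`-partite amplitude tensor `a`. -/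
def flatten {n : ℕ} {d : Fin n → ℕ} (a : (∀ t : Fin n, Fin (d t)) → ℂ) (k : Fin n) :
    Matrix (∀ s : {s : Fin n // s ≠ k}, Fin (d s)) (Fin (d k)) ℂ :=
  fun I j => a (insertAt k I j)

/-- An `n`-partite amplitude tensor is separable if it is a product of local vectors. -/
def Separable {n : ℕ} {d : Fin n → ℕ} (a : (∀ t : Fin n, Fin (d t)) → ℂ) : Prop :=
  ∃ f : ∀ k : Fin n, Fin (d k) → ℂ, ∀ i, a i = ∏ k : Fin n, f k (i k)

/-- An `n`-partite amplitude tensor is normalized if the squared amplitudes sum to 1. -/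
def Normalized {n : ℕ} {d : Fin n → ℕ} (a : (∀ t : Fin n, Fin (d t)) → ℂ) : Prop :=
  ∑ i : ∀ t : Fin n, Fin (d t), ‖a i‖ ^ 2 = 1

open Finset Function

section Exchange

variable {ι : Type*} [DecidableEq ι] {α : ι → Type*}

theorem prod_mul_prod_eq_prod_update_mul_prod_update [Fintype ι] {M : Type*} [CommMonoid M]
    (f : ∀ k, α k → M) (x y : ∀ k, α k) (k : ι) :
    (∏ t, f t (x t)) * ∏ t, f t (y t) =
      (∏ t, f t (update x k (y k) t)) * ∏ t, f t (update y k (x k) t) := by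
  have split : ∀ (z : ∀ k, α k) (v : α k),
      ∏ t, f t (update z k v t) = f k v * ∏ t ∈ univ.erase k, f t (z t) := by
    intro z v
    rw [← mul_prod_erase _ _ (mem_univ k), update_self]
    congr 1
    exact prod_congr rfl fun t ht => by rw [update_of_ne (ne_of_mem_erase ht)]
  have hx := split x (x k)
  have hy := split y (y k)
  rw [update_eq_self] at hx hy
  rw [hx, hy, split, split]
  ac_rfl

theorem pow_card_mul_apply_piecewise {M : Type*} [CommMonoid M] (a : (∀ k, α k) → M)
    (x y : ∀ k, α k)
    (hexch : ∀ z k, a x * a z = a (update x k (z k)) * a (update z k (x k))) (S : Finset ι) :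
    a x ^ #S * a (S.piecewise y x) = a x * ∏ k ∈ S, a (update x k (y k)) := by
  induction S using Finset.induction_on with
  | empty => simp
  | insert k S hk ih =>
    have step : a x * a ((insert k S).piecewise y x) =
        a (update x k (y k)) * a (S.piecewise y x) := by
      rw [hexch, piecewise_insert, update_self, update_idem,
        ← piecewise_eq_of_notMem S y x hk, update_eq_self]
    calc a x ^ #(insert k S) * a ((insert k S).piecewise y x)
        = a x ^ #S * (a x * a ((insert k S).piecewise y x)) := by
          rw [card_insert_of_notMem hk, pow_succ]; ac_rfl
      _ = a (update x k (y k)) * (a x ^ #S * a (S.piecewise y x)) := by rw [step]; ac_rfl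
      _ = a x * ∏ k ∈ insert k S, a (update x k (y k)) := by
          rw [ih, prod_insert hk]; ac_rfl

theorem exists_prod_eq_of_exchange [Fintype ι] [Nonempty ι] {K : Type*} [Field K]
    (a : (∀ k, α k) → K)
    (h : ∀ k x y, a x ≠ 0 → a x * a y = a (update x k (y k)) * a (update y k (x k))) :
    ∃ f : ∀ k, α k → K, ∀ y, a y = ∏ k, f k (y k) := by
  obtain ⟨k₀⟩ := ‹Nonempty ι›
  by_cases hzero : ∀ x, a x = 0
  · exact ⟨0, fun y => by rw [hzero, prod_eq_zero (mem_univ k₀) rfl]⟩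
  push Not at hzero
  obtain ⟨x₀, hx₀⟩ := hzero
  refine ⟨fun k j => a (update x₀ k j) / a x₀ * if k = k₀ then a x₀ else 1, fun y => ?_⟩
  have key := pow_card_mul_apply_piecewise a x₀ y (fun z k => h k x₀ z hx₀) univ
  rw [piecewise_univ, card_univ] at key
  rw [prod_mul_distrib, prod_ite_eq', if_pos (mem_univ k₀), prod_div_distrib, prod_const,
    card_univ]
  field_simp
  linear_combination key

end Exchange

section Flattening

variable {n : ℕ} {d : Fin n → ℕ}

theorem insertAt_apply_self (k : Fin n) (I : ∀ s : {s : Fin n // s ≠ k}, Fin (d s))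
    (j : Fin (d k)) : insertAt k I j k = j := by
  simp [insertAt]

theorem insertAt_eq_update (k : Fin n) (x : ∀ t, Fin (d t)) (j : Fin (d k)) :
    insertAt k (fun s => x s) j = update x k j := by
  funext t
  by_cases h : t = k
  · subst h; simp [insertAt]
  · simp [insertAt, h]

theorem update_insertAt (k : Fin n) (I : ∀ s : {s : Fin n // s ≠ k}, Fin (d s))
    (j j' : Fin (d k)) : update (insertAt k I j) k j' = insertAt k I j' := by
  rw [← insertAt_eq_update]
  congr
  funext s
  simp [insertAt, s.2]

theorem column_prop_iff_exchange (a : (∀ t : Fin n, Fin (d t)) → ℂ) :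
    (∀ k : Fin n, ∀ I₀ : ∀ s : {s : Fin n // s ≠ k}, Fin (d s), ∀ s : Fin (d k),
        flatten a k I₀ s ≠ 0 →
          ∀ t : Fin (d k), ∀ J : ∀ s : {s : Fin n // s ≠ k}, Fin (d s),
            flatten a k I₀ s * flatten a k J t = flatten a k I₀ t * flatten a k J s) ↔
      ∀ k x y, a x ≠ 0 → a x * a y = a (update x k (y k)) * a (update y k (x k)) := by
  constructor
  · intro H k x y hx
    have := H k (fun s => x s) (x k) (by rwa [flatten, insertAt_eq_update, update_eq_self])
      (y k) (fun s => y s)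
    simpa only [flatten, insertAt_eq_update, update_eq_self] using this
  · intro H k I₀ s hs t J
    have := H k (insertAt k I₀ s) (insertAt k J t) hs
    rwa [insertAt_apply_self, insertAt_apply_self, update_insertAt, update_insertAt] at this

end Flattening

theorem separable_iff_column_prop_general {n : ℕ} (hn : 1 ≤ n) (d : Fin n → ℕ)
    (a : (∀ t : Fin n, Fin (d t)) → ℂ) :
    Separable a ↔
      ∀ k : Fin n, ∀ I₀ : ∀ s : {s : Fin n // s ≠ k}, Fin (d s), ∀ s : Fin (d k),
        flatten a k I₀ s ≠ 0 →
          ∀ t : Fin (d k), ∀ J : ∀ s : {s : Fin n // s ≠ k}, Fin (d s),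
            flatten a k I₀ s * flatten a k J t = flatten a k I₀ t * flatten a k J s := by
  have : Nonempty (Fin n) := ⟨⟨0, hn⟩⟩
  rw [column_prop_iff_exchange]
  constructor
  · rintro ⟨f, hf⟩ k x y -
    simp only [hf]
    exact prod_mul_prod_eq_prod_update_mul_prod_update f x y k
  · exact exists_prod_eq_of_exchange a

/-- Corollary 2: separability iff the columns of each flattening are proportional,
as witnessed against any nonzero pivot entry. -/
theorem separable_iff_column_prop {n : ℕ} (hn : 1 ≤ n) (d : Fin n → ℕ) (hd : ∀ k, 1 ≤ d k)
    (a : (∀ t : Fin n, Fin (d t)) → ℂ) (ha : Normalized a) :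
    Separable a ↔
      ∀ k : Fin n, ∀ I₀ : ∀ s : {s : Fin n // s ≠ k}, Fin (d s), ∀ s : Fin (d k),
        flatten a k I₀ s ≠ 0 →
          ∀ t : Fin (d k), ∀ J : ∀ s : {s : Fin n // s ≠ k}, Fin (d s),
            flatten a k I₀ s * flatten a k J t = flatten a k I₀ t * flatten a k J s :=
  separable_iff_column_prop_general hn d a
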